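/- arXiv:2008.03959 — 2 statements merged into one kernel-verified Lean document; each statement's English description precedes it below -/
import Mathlib

section
/- Let ε ∈ [0,1), 0 ≤ p ≤ q < 1−ε, and c ≥ 0, and let μ ∈ [q, 1−ε). If x ∈ [p, q] satisfies d(x/(1−ε), q/(1−ε)) = (1/(1+c)) · d(p/(1−ε), q/(1−ε)) and x' ∈ [p, μ] satisfies d(x'/(1−ε), μ/(1−ε)) = (1/(1+c)) · d(p/(1−ε), μ/(1−ε)), then x ≤ x'. -/
/-!
`klBern` is the Bregman divergence of the negative binary entropy, with gradient the log-odds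
`L m = log m - log (1 - m)`. The three-point identity
`D(x, μ) = D(x, q) + D(q, μ) + (q - x) (L μ - L q)`, together with the chord bound
`(q - p) D(x, q) ≤ (q - x) D(p, q)` coming from convexity of `D(·, q)`, shows that the ratio
`D(x, m) / D(p, m)` does not decrease when `m` grows from `q` to `μ` (all points rescaled by
`1 - ε`). So `D(x', μ) = D(p, μ) / (1 + c) ≤ D(x, μ)`, and as `D(·, μ)` is strictly decreasing
on `[0, μ]`, `x ≤ x'`.
-/

open MeasureTheory ProbabilityTheory Filter Real
open scoped ENNReal

noncomputable section

/-- KL divergence between Bernoulli distributions of means `p` and `q` (real-valued version,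
with the convention `0 * log 0 = 0`, which holds definitionally since `Real.log 0 = 0`). -/
def klBern (p q : ℝ) : ℝ :=
  p * Real.log (p / q) + (1 - p) * Real.log ((1 - p) / (1 - q))

open Set InformationTheory

def logOdds (m : ℝ) : ℝ := log m - log (1 - m)

lemma logOdds_le_logOdds {b m : ℝ} (hb : 0 < b) (hbm : b ≤ m) (hm : m < 1) :
    logOdds b ≤ logOdds m := by
  have h₁ := log_le_log hb hbm
  have h₂ := log_le_log (sub_pos.2 hm) (sub_le_sub_left hbm 1)
  unfold logOdds
  linarith

lemma mul_log_div_eq (x : ℝ) {y : ℝ} (hy : y ≠ 0) : x * log (x / y) = x * log x - x * log y := by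
  rcases eq_or_ne x 0 with rfl | hx
  · simp
  · rw [log_div hx hy, mul_sub]

@[simp]
lemma klBern_self (q : ℝ) : klBern q q = 0 := by
  simp [klBern]

lemma klBern_eq_klFun {p q : ℝ} (hq₀ : 0 < q) (hq₁ : q < 1) :
    klBern p q = q * klFun (p / q) + (1 - q) * klFun ((1 - p) / (1 - q)) := by
  have : 1 - q ≠ 0 := (sub_pos.2 hq₁).ne'
  unfold klBern klFun
  field_simp
  ring

lemma klBern_nonneg {p q : ℝ} (hp₀ : 0 ≤ p) (hp₁ : p ≤ 1) (hq₀ : 0 < q) (hq₁ : q < 1) :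
    0 ≤ klBern p q := by
  rw [klBern_eq_klFun hq₀ hq₁]
  have h₁ := klFun_nonneg (div_nonneg hp₀ hq₀.le)
  have h₂ := klFun_nonneg (div_nonneg (sub_nonneg.2 hp₁) (sub_pos.2 hq₁).le)
  have := sub_pos.2 hq₁
  positivity

lemma klBern_pos {p q : ℝ} (hp₀ : 0 ≤ p) (hp₁ : p ≤ 1) (hq₀ : 0 < q) (hq₁ : q < 1)
    (hpq : p ≠ q) : 0 < klBern p q := by
  rw [klBern_eq_klFun hq₀ hq₁]
  have h₁ : 0 < klFun (p / q) := (klFun_nonneg (by positivity)).lt_of_ne' fun h ↦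
    hpq ((div_eq_one_iff_eq hq₀.ne').1 ((klFun_eq_zero_iff (by positivity)).1 h))
  have h₂ := klFun_nonneg (div_nonneg (sub_nonneg.2 hp₁) (sub_pos.2 hq₁).le)
  have := sub_pos.2 hq₁
  positivity

lemma klBern_eq_neg_binEntropy_sub {p q : ℝ} (hq₀ : q ≠ 0) (hq₁ : q ≠ 1) :
    klBern p q = -binEntropy p - (p * log q + (1 - p) * log (1 - q)) := by
  rw [klBern, mul_log_div_eq p hq₀, mul_log_div_eq (1 - p) (sub_ne_zero.2 hq₁.symm),
    binEntropy, log_inv, log_inv]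
  ring

lemma klBern_three_point (a : ℝ) {b m : ℝ} (hb₀ : b ≠ 0) (hb₁ : b ≠ 1) (hm₀ : m ≠ 0)
    (hm₁ : m ≠ 1) :
    klBern a m = klBern a b + klBern b m + (b - a) * (logOdds m - logOdds b) := by
  rw [klBern_eq_neg_binEntropy_sub hm₀ hm₁, klBern_eq_neg_binEntropy_sub hb₀ hb₁,
    klBern_eq_neg_binEntropy_sub hm₀ hm₁]
  simp only [logOdds, binEntropy, log_inv]
  ring

lemma convexOn_klBern_left {q : ℝ} (hq₀ : q ≠ 0) (hq₁ : q ≠ 1) :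
    ConvexOn ℝ (Icc 0 1) fun p ↦ klBern p q := by
  have hAffine : ConcaveOn ℝ (Icc 0 1) fun p ↦ p * log q + (1 - p) * log (1 - q) :=
    ⟨convex_Icc 0 1, fun x _ y _ a b _ _ hab ↦ le_of_eq (by
      simp only [smul_eq_mul]; linear_combination (log (1 - q)) * hab)⟩
  simp_rw [klBern_eq_neg_binEntropy_sub hq₀ hq₁]
  exact strictConcave_binEntropy.concaveOn.neg.sub hAffine

lemma mul_klBern_le_of_le {p x q : ℝ} (hp : 0 ≤ p) (hpx : p ≤ x) (hxq : x ≤ q) (hq : q < 1) :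
    (q - p) * klBern x q ≤ (q - x) * klBern p q := by
  rcases (hpx.trans hxq).eq_or_lt with rfl | hpq
  · obtain rfl : p = x := le_antisymm hpx hxq
    simp
  have hqp : 0 < q - p := sub_pos.2 hpq
  have hq₀ : 0 < q := hp.trans_lt hpq
  have hconv := (convexOn_klBern_left hq₀.ne' hq.ne).2 ⟨hp, by linarith⟩ ⟨hq₀.le, hq.le⟩
    (div_nonneg (sub_nonneg.2 hxq) hqp.le) (div_nonneg (sub_nonneg.2 hpx) hqp.le)
    (by field_simp; ring : (q - x) / (q - p) + (x - p) / (q - p) = 1)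
  have hx : (q - x) / (q - p) * p + (x - p) / (q - p) * q = x := by field_simp; ring
  simp only [smul_eq_mul, hx, klBern_self, mul_zero, add_zero] at hconv
  calc (q - p) * klBern x q ≤ (q - p) * ((q - x) / (q - p) * klBern p q) := by gcongr
    _ = (q - x) * klBern p q := by field_simp

lemma klBern_strictAntiOn_left {m : ℝ} (hm : m < 1) :
    StrictAntiOn (fun p ↦ klBern p m) (Icc 0 m) := by
  rintro a ⟨ha₀, -⟩ b ⟨hb₀, hbm⟩ hab
  have hb₀ : 0 < b := ha₀.trans_lt hab
  have hb₁ : b < 1 := hbm.trans_lt hm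
  have hm₀ : 0 < m := hb₀.trans_le hbm
  have hkl := klBern_pos ha₀ (hab.le.trans hb₁.le) hb₀ hb₁ hab.ne
  have hgap := mul_nonneg (sub_nonneg.2 hab.le) (sub_nonneg.2 (logOdds_le_logOdds hb₀ hbm hm))
  have := klBern_three_point a hb₀.ne' hb₁.ne hm₀.ne' hm.ne
  dsimp only
  linarith

lemma klBern_mul_klBern_le {p x q m : ℝ} (hp : 0 ≤ p) (hpx : p ≤ x) (hxq : x ≤ q) (hqm : q ≤ m)
    (hm : m < 1) : klBern x q * klBern p m ≤ klBern p q * klBern x m := by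
  rcases (hp.trans (hpx.trans hxq)).eq_or_lt with rfl | hq₀
  · obtain rfl : p = x := by linarith
    exact le_rfl
  have hq₁ : q < 1 := hqm.trans_lt hm
  have hm₀ : 0 < m := hq₀.trans_le hqm
  have hxm := klBern_three_point x hq₀.ne' hq₁.ne hm₀.ne' hm.ne
  have hpm := klBern_three_point p hq₀.ne' hq₁.ne hm₀.ne' hm.ne
  have hchord := mul_klBern_le_of_le hp hpx hxq hq₁
  have hxp : klBern x q ≤ klBern p q :=
    (klBern_strictAntiOn_left hq₁).antitoneOn ⟨hp, hpx.trans hxq⟩ ⟨hp.trans hpx, hxq⟩ hpx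
  have hqm' := klBern_nonneg hq₀.le hq₁.le hm₀ hm
  have hgap := sub_nonneg.2 (logOdds_le_logOdds hq₀ hqm hm)
  rw [hxm, hpm]
  nlinarith [mul_nonneg hqm' (sub_nonneg.2 hxp), mul_nonneg hgap (sub_nonneg.2 hchord)]

theorem klBern_equation_solution_mono_general (ε p q c μ x x' : ℝ)
    (hp0 : 0 ≤ p) (hpq : p ≤ q) (hq : q < 1 - ε)
    (hμ1 : q ≤ μ) (hμ2 : μ < 1 - ε)
    (hx : x ∈ Set.Icc p q)
    (heq : klBern (x / (1 - ε)) (q / (1 - ε)) =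
      (1 / (1 + c)) * klBern (p / (1 - ε)) (q / (1 - ε)))
    (hx' : x' ∈ Set.Icc p μ)
    (heq' : klBern (x' / (1 - ε)) (μ / (1 - ε)) =
      (1 / (1 + c)) * klBern (p / (1 - ε)) (μ / (1 - ε))) :
    x ≤ x' := by
  obtain ⟨hpx, hxq⟩ := hx
  obtain ⟨hpx', hx'μ⟩ := hx'
  rcases hpq.eq_or_lt with rfl | hpq
  · exact hxq.trans hpx'
  have hr : 0 < 1 - ε := by linarith
  have hdiv {a b : ℝ} : a / (1 - ε) ≤ b / (1 - ε) ↔ a ≤ b := div_le_div_iff_of_pos_right hr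
  have hp0' : 0 ≤ p / (1 - ε) := div_nonneg hp0 hr.le
  have hpq' : p / (1 - ε) < q / (1 - ε) := div_lt_div_of_pos_right hpq hr
  have hq' : q / (1 - ε) < 1 := (div_lt_one hr).2 hq
  have hμ2' : μ / (1 - ε) < 1 := (div_lt_one hr).2 hμ2
  have hklpq : 0 < klBern (p / (1 - ε)) (q / (1 - ε)) :=
    klBern_pos hp0' (hpq'.trans hq').le (hp0'.trans_lt hpq') hq' hpq'.ne
  have hkl : klBern (p / (1 - ε)) (q / (1 - ε)) * klBern (x' / (1 - ε)) (μ / (1 - ε)) ≤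
      klBern (p / (1 - ε)) (q / (1 - ε)) * klBern (x / (1 - ε)) (μ / (1 - ε)) :=
    calc _ = klBern (x / (1 - ε)) (q / (1 - ε)) * klBern (p / (1 - ε)) (μ / (1 - ε)) := by
          rw [heq, heq']; ring
      _ ≤ _ := klBern_mul_klBern_le hp0' (hdiv.2 hpx) (hdiv.2 hxq) (hdiv.2 hμ1) hμ2'
  rw [← hdiv]
  exact ((klBern_strictAntiOn_left hμ2').le_iff_ge
    ⟨hp0'.trans (hdiv.2 hpx'), hdiv.2 hx'μ⟩ ⟨hp0'.trans (hdiv.2 hpx), hdiv.2 (hxq.trans hμ1)⟩).1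
    (le_of_mul_le_mul_left hkl hklpq)

/-- **Lemma.** The solution of the scaled-KL equation increases with the second argument:
if `x ∈ [p, q]` solves the equation at level `q` and `x' ∈ [p, μ]` solves it at level
`μ ∈ [q, 1−ε)`, then `x ≤ x'`. -/
theorem klBern_equation_solution_mono (ε p q c μ x x' : ℝ) (hε0 : 0 ≤ ε) (hε1 : ε < 1)
    (hp0 : 0 ≤ p) (hpq : p ≤ q) (hq : q < 1 - ε) (hc : 0 ≤ c)
    (hμ1 : q ≤ μ) (hμ2 : μ < 1 - ε)
    (hx : x ∈ Set.Icc p q)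
    (heq : klBern (x / (1 - ε)) (q / (1 - ε)) =
      (1 / (1 + c)) * klBern (p / (1 - ε)) (q / (1 - ε)))
    (hx' : x' ∈ Set.Icc p μ)
    (heq' : klBern (x' / (1 - ε)) (μ / (1 - ε)) =
      (1 / (1 + c)) * klBern (p / (1 - ε)) (μ / (1 - ε))) :
    x ≤ x' :=
  klBern_equation_solution_mono_general ε p q c μ x x' hp0 hpq hq hμ1 hμ2 hx heq hx' heq'

end
end

section
/- Let X_1, X_2, … be i.i.d. Bernoulli random variables with mean μ ∈ [0,1), and let μ̂_s = (1/s) Σ_{i=1}^s X_i. Then for any x with μ < x ≤ 1 and every horizon T ≥ 1: Σ_{s=1}^T P(μ̂_s > x) ≤ 1 / d(x, μ). -/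
/-!
Chernoff's method with the optimal tilt `t = log (x (1 - μ) / (μ (1 - x)))`, for which
`exp (-t x) · E[exp (t X)] = exp (-d(x, μ))`, gives `P(μ̂_s > x) ≤ exp (-s d(x, μ))`; summing the
geometric series gives at most `1 / (exp d - 1) ≤ 1 / d`. In the degenerate cases `μ = 0`
(every `X i` vanishes a.s.) and `1 ≤ x` (`μ̂_s ≤ 1` a.s.) all the events are null.
-/

open MeasureTheory ProbabilityTheory Filter Real
open scoped ENNReal

noncomputable section

/-- KL divergence between Bernoulli distributions of means `p` and `q`, with the conventions
`d(p,q) = ∞` if `p < 1` and `q ≥ 1`, or if `p > 0` and `q = 0`. -/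
def klBernE (p q : ℝ) : ℝ≥0∞ :=
  if (p < 1 ∧ 1 ≤ q) ∨ (0 < p ∧ q = 0) then ⊤ else ENNReal.ofReal (klBern p q)

/-- The Bernoulli law with mean `p`, as a measure on `ℝ`. -/
def bernoulliLaw (p : ℝ) : Measure ℝ :=
  ENNReal.ofReal p • Measure.dirac (1 : ℝ) + ENNReal.ofReal (1 - p) • Measure.dirac (0 : ℝ)

def empMean {Ω : Type*} (X : ℕ → Ω → ℝ) (s : ℕ) (ω : Ω) : ℝ :=
  (∑ i ∈ Finset.Icc 1 s, X i ω) / s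

lemma klBern_pos_s19 {p q : ℝ} (hp0 : 0 < p) (hp1 : p < 1) (hq0 : 0 < q) (hq1 : q < 1)
    (hpq : p ≠ q) : 0 < klBern p q := by
  have h1p : 0 < 1 - p := by linarith
  have h1q : 0 < 1 - q := by linarith
  -- Gibbs' inequality, from `log y < y - 1` for `y ≠ 1`
  have hlog₁ : log (q / p) < q / p - 1 :=
    log_lt_sub_one_of_pos (by positivity) (by rwa [ne_eq, div_eq_one_iff_eq hp0.ne', eq_comm])
  have hlog₂ : log ((1 - q) / (1 - p)) ≤ (1 - q) / (1 - p) - 1 :=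
    log_le_sub_one_of_pos (by positivity)
  rw [← neg_lt_neg_iff, ← log_inv, inv_div] at hlog₁
  rw [← neg_le_neg_iff, ← log_inv, inv_div] at hlog₂
  have h₁ := mul_lt_mul_of_pos_left hlog₁ hp0
  have h₂ := mul_le_mul_of_nonneg_left hlog₂ h1p.le
  have e₁ : p * -(q / p - 1) = p - q := by field_simp; ring
  have e₂ : (1 - p) * -((1 - q) / (1 - p) - 1) = q - p := by field_simp; ring
  unfold klBern
  linarith

lemma exp_neg_klBern_eq {p q t : ℝ} (hp0 : 0 < p) (hp1 : p < 1) (hq0 : 0 < q) (hq1 : q < 1)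
    (ht : t = log (p / q) - log ((1 - p) / (1 - q))) :
    exp (-klBern p q) = exp (-t * p) * (q * exp t + (1 - q)) := by
  have h1p : 0 < 1 - p := by linarith
  have h1q : 0 < 1 - q := by linarith
  have hmgf : q * exp t + (1 - q) = exp (-log ((1 - p) / (1 - q))) := by
    rw [ht, exp_sub, exp_neg, exp_log (by positivity), exp_log (by positivity)]
    field_simp
    ring
  rw [hmgf, ← exp_add, ht, klBern]
  congr 1
  ring

lemma sum_Icc_exp_neg_nat_mul_le_inv {d : ℝ} (hd : 0 < d) (T : ℕ) :
    ∑ s ∈ Finset.Icc 1 T, exp (-(s * d)) ≤ d⁻¹ := by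
  have hr : exp (-d) < 1 := exp_lt_one_iff.mpr (neg_lt_zero.mpr hd)
  calc ∑ s ∈ Finset.Icc 1 T, exp (-(s * d)) = ∑ s ∈ Finset.Ico 1 (T + 1), exp (-d) ^ s := by
        rw [Finset.Ico_add_one_right_eq_Icc]
        refine Finset.sum_congr rfl fun s _ => ?_
        rw [← exp_nat_mul, mul_neg, mul_comm]
    _ ≤ exp (-d) ^ 1 / (1 - exp (-d)) := geom_sum_Ico_le_of_lt_one (exp_pos _).le hr
    _ = (exp d - 1)⁻¹ := by
        rw [pow_one, exp_neg]
        field_simp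
    _ ≤ d⁻¹ := inv_anti₀ hd (by linarith [add_one_le_exp d])

lemma bernoulliLaw_zero : bernoulliLaw 0 = Measure.dirac 0 := by
  simp [bernoulliLaw]

lemma ae_bernoulliLaw_le_one (p : ℝ) : ∀ᵐ y ∂bernoulliLaw p, y ≤ 1 := by
  have hmeas : MeasurableSet {y : ℝ | y ≤ 1} := measurableSet_le measurable_id measurable_const
  simp only [bernoulliLaw, ae_add_measure_iff]
  exact ⟨Measure.ae_smul_measure ((ae_dirac_iff hmeas).mpr le_rfl) _,
    Measure.ae_smul_measure ((ae_dirac_iff hmeas).mpr zero_le_one) _⟩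

lemma integrable_bernoulliLaw (p : ℝ) (f : ℝ → ℝ) : Integrable f (bernoulliLaw p) :=
  ((integrable_dirac enorm_lt_top).smul_measure ENNReal.ofReal_ne_top).add_measure
    ((integrable_dirac enorm_lt_top).smul_measure ENNReal.ofReal_ne_top)

lemma integral_bernoulliLaw {p : ℝ} (hp0 : 0 ≤ p) (hp1 : p ≤ 1) (f : ℝ → ℝ) :
    ∫ y, f y ∂bernoulliLaw p = p * f 1 + (1 - p) * f 0 := by
  rw [bernoulliLaw, integral_add_measure, integral_smul_measure, integral_smul_measure,
    integral_dirac, integral_dirac, ENNReal.toReal_ofReal hp0,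
    ENNReal.toReal_ofReal (sub_nonneg.mpr hp1), smul_eq_mul, smul_eq_mul]
  all_goals exact (integrable_dirac enorm_lt_top).smul_measure ENNReal.ofReal_ne_top

lemma mgf_id_bernoulliLaw {p : ℝ} (hp0 : 0 ≤ p) (hp1 : p ≤ 1) (t : ℝ) :
    mgf id (bernoulliLaw p) t = p * exp t + (1 - p) := by
  simp [mgf, integral_bernoulliLaw hp0 hp1]

section Chernoff

variable {Ω : Type*} [MeasurableSpace Ω] {P : Measure Ω}

lemma measure_lt_empMean_eq_zero {X : ℕ → Ω → ℝ} {c x : ℝ} (hX : ∀ i, ∀ᵐ ω ∂P, X i ω ≤ c)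
    (hcx : c ≤ x) {s : ℕ} (hs : s ≠ 0) : P {ω | x < empMean X s ω} = 0 := by
  rw [measure_eq_zero_iff_ae_notMem]
  filter_upwards [ae_all_iff.mpr hX] with ω hω
  have hsum : ∑ i ∈ Finset.Icc 1 s, X i ω ≤ s * c := by
    simpa using Finset.sum_le_card_nsmul (Finset.Icc 1 s) (X · ω) c fun i _ => hω i
  simp only [not_lt, empMean]
  rw [div_le_iff₀ (by positivity)]
  linarith [mul_le_mul_of_nonneg_left hcx (Nat.cast_nonneg (α := ℝ) s)]

lemma ProbabilityTheory.iIndepFun.measureReal_le_sum_le {ι : Type*} {X : ι → Ω → ℝ} (hindep : iIndepFun X P) (hmeas : ∀ i, Measurable (X i)) (s : Finset ι)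
    {t M : ℝ} (ht : 0 ≤ t) (hint : ∀ i ∈ s, Integrable (fun ω => exp (t * X i ω)) P)
    (hmgf : ∀ i ∈ s, mgf (X i) P t = M) (a : ℝ) :
    P.real {ω | a ≤ ∑ i ∈ s, X i ω} ≤ exp (-t * a) * M ^ s.card := by
  have := hindep.isProbabilityMeasure
  have h := measure_ge_le_exp_mul_mgf a ht (hindep.integrable_exp_mul_sum hmeas hint)
  rw [hindep.mgf_sum hmeas, Finset.prod_congr rfl hmgf, Finset.prod_const] at h
  simpa only [Finset.sum_apply] using h

lemma measure_lt_empMean_le_exp_neg_klBern {X : ℕ → Ω → ℝ}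
    (hindep : iIndepFun X P) (hmeas : ∀ i, Measurable (X i)) {μ : ℝ}
    (hlaw : ∀ i, P.map (X i) = bernoulliLaw μ) {x : ℝ} (hμ0 : 0 < μ) (hμx : μ < x) (hx1 : x < 1)
    {s : ℕ} (hs : s ≠ 0) :
    P {ω | x < empMean X s ω} ≤ ENNReal.ofReal (exp (-(s * klBern x μ))) := by
  have := hindep.isProbabilityMeasure
  set t := log (x / μ) - log ((1 - x) / (1 - μ))
  have ht : 0 ≤ t := sub_nonneg.mpr <| (log_nonpos (by bound) (by bound)).trans
    (log_nonneg ((one_le_div hμ0).mpr hμx.le))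
  have hint : ∀ i, Integrable (fun ω => exp (t * X i ω)) P := fun i =>
    (integrable_map_measure (g := fun y => exp (t * y))
      (measurable_const_mul t).exp.aestronglyMeasurable (hmeas i).aemeasurable).mp
      (hlaw i ▸ integrable_bernoulliLaw μ _)
  have hmgf : ∀ i, mgf (X i) P t = μ * exp t + (1 - μ) := fun i => by
    rw [← mgf_id_map (hmeas i).aemeasurable, hlaw i, mgf_id_bernoulliLaw hμ0.le (by linarith)]
  have hsub : {ω | x < empMean X s ω} ⊆ {ω | s * x ≤ ∑ i ∈ Finset.Icc 1 s, X i ω} := by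
    intro ω (hω : x < (∑ i ∈ Finset.Icc 1 s, X i ω) / s)
    exact ((lt_div_iff₀' (by positivity)).mp hω).le
  rw [← ofReal_measureReal]
  refine ENNReal.ofReal_le_ofReal <| (measureReal_mono hsub).trans ?_
  calc P.real {ω | s * x ≤ ∑ i ∈ Finset.Icc 1 s, X i ω}
      ≤ exp (-t * (s * x)) * (μ * exp t + (1 - μ)) ^ (Finset.Icc 1 s).card :=
        hindep.measureReal_le_sum_le hmeas _ ht (fun i _ => hint i) (fun i _ => hmgf i) _
    _ = (exp (-t * x) * (μ * exp t + (1 - μ))) ^ s := by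
        rw [Nat.card_Icc, Nat.add_sub_cancel, mul_pow, ← exp_nat_mul]
        ring_nf
    _ = exp (-(s * klBern x μ)) := by
        rw [← exp_neg_klBern_eq (hμ0.trans hμx) hx1 hμ0 (by linarith) rfl, ← exp_nat_mul, mul_neg]

end Chernoff

lemma klBernE_of_pos_of_lt_one {p q : ℝ} (hq0 : 0 < q) (hq1 : q < 1) :
    klBernE p q = ENNReal.ofReal (klBern p q) :=
  if_neg (by rintro (⟨-, h⟩ | ⟨-, h⟩) <;> linarith)

theorem sum_prob_empMean_gt_le_general {Ω : Type*} [MeasurableSpace Ω]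
    (P : Measure Ω)
    (μ : ℝ) (hμ0 : 0 ≤ μ) (hμ1 : μ < 1)
    (X : ℕ → Ω → ℝ) (hmeas : ∀ i, Measurable (X i))
    (hlaw : ∀ i, P.map (X i) = bernoulliLaw μ)
    (hindep : iIndepFun (m := fun _ : ℕ => (inferInstance : MeasurableSpace ℝ)) X P)
    (x : ℝ) (hx1 : μ < x) (T : ℕ) :
    ∑ s ∈ Finset.Icc 1 T,
        P {ω | x < (∑ i ∈ Finset.Icc 1 s, X i ω) / (s : ℝ)} ≤ 1 / klBernE x μ := by
  have hs : ∀ s ∈ Finset.Icc 1 T, s ≠ 0 := fun s hs =>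
    Nat.one_le_iff_ne_zero.mp (Finset.mem_Icc.mp hs).1
  have h_null : ∀ c ≤ x, (∀ i, ∀ᵐ ω ∂P, X i ω ≤ c) →
      ∑ s ∈ Finset.Icc 1 T, P {ω | x < empMean X s ω} ≤ 1 / klBernE x μ := fun c hcx hX => by
    rw [Finset.sum_eq_zero fun s hs' => measure_lt_empMean_eq_zero hX hcx (hs s hs')]
    exact zero_le
  rcases hμ0.eq_or_lt with rfl | hμ_pos
  · refine h_null 0 hx1.le fun i => ae_of_ae_map (p := (· ≤ 0)) (hmeas i).aemeasurable ?_
    rw [hlaw i, bernoulliLaw_zero]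
    exact (ae_dirac_iff (measurableSet_le measurable_id measurable_const)).mpr le_rfl
  rcases le_or_gt 1 x with hx_ge | hx_lt
  · exact h_null 1 hx_ge fun i =>
      ae_of_ae_map (hmeas i).aemeasurable (hlaw i ▸ ae_bernoulliLaw_le_one μ)
  have hd := klBern_pos_s19 (hμ_pos.trans hx1) hx_lt hμ_pos hμ1 hx1.ne'
  rw [klBernE_of_pos_of_lt_one hμ_pos hμ1, one_div, ← ENNReal.ofReal_inv_of_pos hd]
  calc ∑ s ∈ Finset.Icc 1 T, P {ω | x < empMean X s ω}
      ≤ ∑ s ∈ Finset.Icc 1 T, ENNReal.ofReal (exp (-(s * klBern x μ))) :=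
        Finset.sum_le_sum fun s hs' => measure_lt_empMean_le_exp_neg_klBern hindep hmeas hlaw
          hμ_pos hx1 hx_lt (hs s hs')
    _ = ENNReal.ofReal (∑ s ∈ Finset.Icc 1 T, exp (-(s * klBern x μ))) :=
        (ENNReal.ofReal_sum_of_nonneg fun s _ => (exp_pos _).le).symm
    _ ≤ ENNReal.ofReal (klBern x μ)⁻¹ :=
        ENNReal.ofReal_le_ofReal (sum_Icc_exp_neg_nat_mul_le_inv hd T)

/-- **Lemma (Chernoff-type maximal bound).** If `X_1, X_2, …` are i.i.d. Bernoulli with mean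
`μ ∈ [0,1)` and `μ̂_s = (Σ_{i=1}^s X_i)/s`, then for any `x` with `μ < x ≤ 1` and any horizon
`T ≥ 1`, `Σ_{s=1}^T P(μ̂_s > x) ≤ 1 / d(x, μ)`. -/
theorem sum_prob_empMean_gt_le {Ω : Type*} [MeasurableSpace Ω]
    (P : Measure Ω) [IsProbabilityMeasure P]
    (μ : ℝ) (hμ0 : 0 ≤ μ) (hμ1 : μ < 1)
    (X : ℕ → Ω → ℝ) (hmeas : ∀ i, Measurable (X i))
    (hlaw : ∀ i, P.map (X i) = bernoulliLaw μ)
    (hindep : iIndepFun (m := fun _ : ℕ => (inferInstance : MeasurableSpace ℝ)) X P)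
    (x : ℝ) (hx1 : μ < x) (hx2 : x ≤ 1) (T : ℕ) (hT : 1 ≤ T) :
    ∑ s ∈ Finset.Icc 1 T,
        P {ω | x < (∑ i ∈ Finset.Icc 1 s, X i ω) / (s : ℝ)} ≤ 1 / klBernE x μ :=
  sum_prob_empMean_gt_le_general P μ hμ0 hμ1 X hmeas hlaw hindep x hx1 T

end
end
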